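/- The Choi biquadratic form F(x,y) = x₁²y₁² + x₂²y₂² + x₃²y₃² − 2(x₁y₁x₂y₂ + x₂y₂x₃y₃ + x₁y₁x₃y₃) + 2(x₁²y₂² + x₂²y₃² + x₃²y₁²) is nonnegative for all real x, y but is not a sum of squares of real polynomials. -/

import Mathlib

/-!
Nonnegativity: as a quadratic form in `x`, `F(·, y)` has leading principal minors
`m = y₁² + 2y₂²` and `n = m (y₂² + 2y₃²) - y₁²y₂²`; completing the square twice writes `m n F`
as a sum of squares, and `m n > 0` unless `y₂ = 0`, where `F` is visibly a sum of squares.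

Not a sum of squares: if `F = ∑ hⱼ²`, then along every line in the `x`-directions (or the
`y`-directions) `F` is quadratic, so each `hⱼ` is affine there, and it vanishes at `x = 0`
(or `y = 0`) because `F` does. Hence `B(x, y) = (hⱼ(x, y))ⱼ` is bilinear with
`‖B(x, y)‖² = F(x, y)`. Write `eᵢ` for the standard basis. As
`F(e₂, e₁) = F(e₃, e₂) = F(e₁, e₃) = 0`, the parallelogram law applied to `B(eᵢ ± eₗ, eᵢ ± eₗ)`
forces `B(eᵢ, eᵢ) + B(eₗ, eₗ) = 0` for `(i, l) = (1, 2), (2, 3), (3, 1)`, so `B(e₁, e₁) = 0`,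
contradicting `F(e₁, e₁) = 1`.
-/

open MvPolynomial

/-- The Choi biquadratic form in variables `x = (X 0, X 1, X 2)` and
`y = (X 3, X 4, X 5)`. -/
noncomputable def choiForm : MvPolynomial (Fin 6) ℝ :=
  X 0 ^ 2 * X 3 ^ 2 + X 1 ^ 2 * X 4 ^ 2 + X 2 ^ 2 * X 5 ^ 2 -
    2 * (X 0 * X 3 * X 1 * X 4 + X 1 * X 4 * X 2 * X 5 + X 0 * X 3 * X 2 * X 5) +
    2 * (X 0 ^ 2 * X 4 ^ 2 + X 1 ^ 2 * X 5 ^ 2 + X 2 ^ 2 * X 3 ^ 2)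

open Polynomial in
theorem Polynomial.natDegree_le_of_natDegree_sum_sq_le {R ι : Type*} [CommRing R] [LinearOrder R]
    [IsStrictOrderedRing R] {s : Finset ι} {p : ι → R[X]} {d : ℕ}
    (h : (∑ i ∈ s, p i ^ 2).natDegree ≤ 2 * d) {i : ι} (hi : i ∈ s) :
    (p i).natDegree ≤ d := by
  by_contra! hd
  obtain ⟨i₀, hi₀, hD⟩ := s.exists_mem_eq_sup ⟨i, hi⟩ fun i => (p i).natDegree
  set D := s.sup fun i => (p i).natDegree
  have hle : ∀ i ∈ s, (p i).natDegree ≤ D := fun i hi =>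
    Finset.le_sup (f := fun i => (p i).natDegree) hi
  have hdD : d < D := hd.trans_le (hle i hi)
  have htop : ∑ i ∈ s, (p i).coeff D ^ 2 = 0 := by
    rw [← coeff_eq_zero_of_natDegree_lt (h.trans_lt (by omega : 2 * d < 2 * D)), finsetSum_coeff]
    exact Finset.sum_congr rfl fun i hi => (coeff_pow_of_natDegree_le (hle i hi)).symm
  have hlead : (p i₀).leadingCoeff = 0 := by
    rw [leadingCoeff, ← hD]
    exact pow_eq_zero_iff two_ne_zero |>.mp <|
      (Finset.sum_eq_zero_iff_of_nonneg fun i _ => sq_nonneg _).mp htop i₀ hi₀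
  have := hD ▸ hdD
  simp [leadingCoeff_eq_zero.mp hlead] at this

noncomputable def MvPolynomial.restrictLine {σ R : Type*} [CommRing R] (u w : σ → R) :
    MvPolynomial σ R →ₐ[R] Polynomial R :=
  aeval fun i => Polynomial.C (u i) + Polynomial.C (w i) * Polynomial.X

theorem MvPolynomial.eval_restrictLine {σ R : Type*} [CommRing R] (u w : σ → R)
    (g : MvPolynomial σ R) (t : R) :
    (restrictLine u w g).eval t = eval (u + t • w) g := by
  rw [restrictLine, aeval_def, ← Polynomial.coe_evalRingHom, eval₂_comp_left]
  congr 1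
  · ext; simp
  · ext i
    simp only [Function.comp_apply, Polynomial.coe_evalRingHom, Polynomial.eval_add,
      Polynomial.eval_mul, Polynomial.eval_C, Polynomial.eval_X, Pi.add_apply, Pi.smul_apply,
      smul_eq_mul, mul_comm]

section SumOfSquares

variable {σ ι R : Type*} [CommRing R] [LinearOrder R] [IsStrictOrderedRing R]
  {s : Finset ι} {g : ι → MvPolynomial σ R} {i : ι}

theorem MvPolynomial.eval_eq_zero_of_eval_sum_sq_eq_zero {v : σ → R}
    (h : eval v (∑ i ∈ s, g i ^ 2) = 0) (hi : i ∈ s) : eval v (g i) = 0 := by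
  simp only [map_sum, map_pow] at h
  exact pow_eq_zero_iff two_ne_zero |>.mp <|
    (Finset.sum_eq_zero_iff_of_nonneg fun i _ => sq_nonneg _).mp h i hi

theorem MvPolynomial.exists_affine_of_natDegree_restrictLine_sum_sq_le {u w : σ → R}
    (h : (restrictLine u w (∑ i ∈ s, g i ^ 2)).natDegree ≤ 2) (hi : i ∈ s) :
    ∃ a b : R, ∀ t : R, eval (u + t • w) (g i) = a * t + b := by
  simp only [map_sum, map_pow] at h
  obtain ⟨a, b, hab⟩ := Polynomial.exists_eq_X_add_C_of_natDegree_le_one <|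
    Polynomial.natDegree_le_of_natDegree_sum_sq_le (d := 1) h hi
  exact ⟨a, b, fun t => by simp [← eval_restrictLine, hab]⟩

end SumOfSquares

theorem isLinearMap_of_affine_on_lines {K E : Type*} [Field K] [NeZero (2 : K)] [AddCommGroup E]
    [Module K E] {f : E → K} (h0 : f 0 = 0)
    (hline : ∀ x v : E, ∃ a b : K, ∀ t : K, f (x + t • v) = a * t + b) :
    IsLinearMap K f := by
  have hsec : ∀ (x v : E) (t : K), f (x + t • v) = f x + t * (f (x + v) - f x) := by
    intro x v t
    obtain ⟨a, b, hab⟩ := hline x v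
    have h0 := hab 0
    have h1 := hab 1
    simp only [zero_smul, add_zero, one_smul, mul_zero, zero_add, mul_one] at h0 h1
    rw [hab, h0, h1]
    ring
  have hsmul : ∀ (c : K) (x : E), f (c • x) = c * f x := fun c x => by
    simpa [h0] using hsec 0 x c
  refine ⟨fun x y => ?_, hsmul⟩
  have h2 : (2 : K) ≠ 0 := two_ne_zero
  have hmid : (2 : K)⁻¹ • (x + y) = x + (2 : K)⁻¹ • (y - x) := by
    match_scalars <;> field_simp; ring
  have := hsmul 2⁻¹ (x + y)
  rw [hmid, hsec, add_sub_cancel] at this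
  field_simp at this
  linear_combination -this

def join (x y : Fin 3 → ℝ) : Fin 6 → ℝ := ![x 0, x 1, x 2, y 0, y 1, y 2]

theorem join_add_smul (x y x' y' : Fin 3 → ℝ) (t : ℝ) :
    join (x + t • x') (y + t • y') = join x y + t • join x' y' := by
  ext i; fin_cases i <;> simp [join]

theorem choi_nonneg (x₁ x₂ x₃ y₁ y₂ y₃ : ℝ) :
    0 ≤ x₁ ^ 2 * y₁ ^ 2 + x₂ ^ 2 * y₂ ^ 2 + x₃ ^ 2 * y₃ ^ 2 -
      2 * (x₁ * y₁ * x₂ * y₂ + x₂ * y₂ * x₃ * y₃ + x₁ * y₁ * x₃ * y₃) +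
      2 * (x₁ ^ 2 * y₂ ^ 2 + x₂ ^ 2 * y₃ ^ 2 + x₃ ^ 2 * y₁ ^ 2) := by
  rcases eq_or_ne y₂ 0 with rfl | hy₂
  · nlinarith [sq_nonneg (x₁ * y₁ - x₃ * y₃), sq_nonneg (x₂ * y₃), sq_nonneg (x₃ * y₁)]
  set m := y₁ ^ 2 + 2 * y₂ ^ 2
  set n := 2 * y₁ ^ 2 * y₃ ^ 2 + 2 * y₂ ^ 4 + 4 * y₂ ^ 2 * y₃ ^ 2
  refine nonneg_of_mul_nonneg_right (a := m * n) ?_ (by positivity)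
  have key : m * n * (x₁ ^ 2 * y₁ ^ 2 + x₂ ^ 2 * y₂ ^ 2 + x₃ ^ 2 * y₃ ^ 2 -
      2 * (x₁ * y₁ * x₂ * y₂ + x₂ * y₂ * x₃ * y₃ + x₁ * y₁ * x₃ * y₃) +
      2 * (x₁ ^ 2 * y₂ ^ 2 + x₂ ^ 2 * y₃ ^ 2 + x₃ ^ 2 * y₁ ^ 2)) =
      n * (m * x₁ - y₁ * y₂ * x₂ - y₁ * y₃ * x₃) ^ 2 +
        (n * x₂ - 2 * y₂ * y₃ * (y₁ ^ 2 + y₂ ^ 2) * x₃) ^ 2 +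
        4 * (y₁ ^ 6 * y₃ ^ 2 + y₁ ^ 2 * y₂ ^ 2 * y₃ ^ 4 + 3 * y₁ ^ 4 * y₂ ^ 2 * y₃ ^ 2 +
          y₁ ^ 4 * y₂ ^ 4 + 2 * y₁ ^ 2 * y₂ ^ 6 + 2 * y₂ ^ 4 * y₃ ^ 4 +
          2 * y₁ ^ 2 * y₂ ^ 4 * y₃ ^ 2) * x₃ ^ 2 := by
    ring
  rw [key]
  positivity

theorem eval_choiForm_nonneg (v : Fin 6 → ℝ) : 0 ≤ eval v choiForm := by
  simpa [choiForm] using choi_nonneg (v 0) (v 1) (v 2) (v 3) (v 4) (v 5)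

theorem eval_join_choiForm (x y : Fin 3 → ℝ) :
    eval (join x y) choiForm =
      x 0 ^ 2 * y 0 ^ 2 + x 1 ^ 2 * y 1 ^ 2 + x 2 ^ 2 * y 2 ^ 2 -
        2 * (x 0 * y 0 * x 1 * y 1 + x 1 * y 1 * x 2 * y 2 + x 0 * y 0 * x 2 * y 2) +
        2 * (x 0 ^ 2 * y 1 ^ 2 + x 1 ^ 2 * y 2 ^ 2 + x 2 ^ 2 * y 0 ^ 2) := by
  simp [choiForm, join]

theorem natDegree_restrictLine_choiForm_left (x y x' : Fin 3 → ℝ) :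
    (restrictLine (join x y) (join x' 0) choiForm).natDegree ≤ 2 := by
  simp only [restrictLine, join, Fin.isValue, Pi.zero_apply, choiForm, map_add, map_sub, map_mul,
    map_pow, aeval_X, Matrix.cons_val_zero, Matrix.cons_val, map_zero, zero_mul, add_zero,
    Matrix.cons_val_one, aeval_ofNat]
  compute_degree

theorem natDegree_restrictLine_choiForm_right (x y y' : Fin 3 → ℝ) :
    (restrictLine (join x y) (join 0 y') choiForm).natDegree ≤ 2 := by
  simp only [restrictLine, join, Fin.isValue, Pi.zero_apply, choiForm, map_add, map_sub, map_mul,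
    map_pow, aeval_X, Matrix.cons_val_zero, Matrix.cons_val, map_zero, zero_mul, add_zero,
    Matrix.cons_val_one, aeval_ofNat]
  compute_degree

section NormSqBilinear

variable {V : Type*} [NormedAddCommGroup V] [InnerProductSpace ℝ V]
  {B : (Fin 3 → ℝ) →ₗ[ℝ] (Fin 3 → ℝ) →ₗ[ℝ] V}

theorem eq_zero_of_norm_sq_eq_choi (hB : ∀ x y, ‖B x y‖ ^ 2 = eval (join x y) choiForm)
    {x y : Fin 3 → ℝ} (h : eval (join x y) choiForm = 0) : B x y = 0 := by
  rw [← hB] at h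
  simpa using h

theorem add_eq_zero_of_norm_sq_eq_choi (hB : ∀ x y, ‖B x y‖ ^ 2 = eval (join x y) choiForm)
    {x y : Fin 3 → ℝ} (hyx : eval (join y x) choiForm = 0)
    (hxy : eval (join (x + y) (x + y)) choiForm + eval (join (x - y) (x - y)) choiForm =
      2 * eval (join x y) choiForm) :
    B x x + B y y = 0 := by
  have hpar := parallelogram_law_with_norm ℝ (B x x + B y y) (B x y)
  have hplus : B (x + y) (x + y) = B x x + B y y + B x y := by
    simp only [map_add, LinearMap.add_apply, eq_zero_of_norm_sq_eq_choi hB hyx]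
    abel
  have hminus : B (x - y) (x - y) = B x x + B y y - B x y := by
    simp only [map_sub, LinearMap.sub_apply, eq_zero_of_norm_sq_eq_choi hB hyx]
    abel
  rw [← hplus, ← hminus, hB, hB, hB, hxy] at hpar
  have : ‖B x x + B y y‖ ^ 2 = 0 := by linarith
  simpa using this

theorem not_forall_norm_sq_eq_choi (B : (Fin 3 → ℝ) →ₗ[ℝ] (Fin 3 → ℝ) →ₗ[ℝ] V) :
    ¬ ∀ x y, ‖B x y‖ ^ 2 = eval (join x y) choiForm := by
  intro hB
  let e (i : Fin 3) : Fin 3 → ℝ := Pi.single i 1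
  have h01 : B (e 0) (e 0) + B (e 1) (e 1) = 0 :=
    add_eq_zero_of_norm_sq_eq_choi hB (by simp [e, eval_join_choiForm])
      (by simp [e, eval_join_choiForm]; norm_num)
  have h12 : B (e 1) (e 1) + B (e 2) (e 2) = 0 :=
    add_eq_zero_of_norm_sq_eq_choi hB (by simp [e, eval_join_choiForm])
      (by simp [e, eval_join_choiForm]; norm_num)
  have h20 : B (e 2) (e 2) + B (e 0) (e 0) = 0 :=
    add_eq_zero_of_norm_sq_eq_choi hB (by simp [e, eval_join_choiForm])
      (by simp [e, eval_join_choiForm]; norm_num)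
  have h0 : B (e 0) (e 0) = 0 := by
    have : (2 : ℝ) • B (e 0) (e 0) = (B (e 0) (e 0) + B (e 1) (e 1)) -
        (B (e 1) (e 1) + B (e 2) (e 2)) + (B (e 2) (e 2) + B (e 0) (e 0)) := by
      module
    rw [h01, h12, h20] at this
    simpa using this
  have := hB (e 0) (e 0)
  simp [h0, e, eval_join_choiForm] at this

end NormSqBilinear

section ChoiSumOfSquares

variable {k : ℕ} {h : Fin k → MvPolynomial (Fin 6) ℝ}

theorem isLinearMap_eval_join_left (hsos : choiForm = ∑ j, h j ^ 2) (j : Fin k)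
    (y : Fin 3 → ℝ) : IsLinearMap ℝ fun x => eval (join x y) (h j) := by
  refine isLinearMap_of_affine_on_lines ?_ fun x x' => ?_
  · refine eval_eq_zero_of_eval_sum_sq_eq_zero ?_ (Finset.mem_univ j)
    simp [← hsos, eval_join_choiForm]
  · have hdeg := natDegree_restrictLine_choiForm_left x y x'
    rw [hsos] at hdeg
    obtain ⟨a, b, hab⟩ :=
      exists_affine_of_natDegree_restrictLine_sum_sq_le hdeg (Finset.mem_univ j)
    refine ⟨a, b, fun t => ?_⟩
    rw [← hab, ← join_add_smul, smul_zero, add_zero]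

theorem isLinearMap_eval_join_right (hsos : choiForm = ∑ j, h j ^ 2) (j : Fin k)
    (x : Fin 3 → ℝ) : IsLinearMap ℝ fun y => eval (join x y) (h j) := by
  refine isLinearMap_of_affine_on_lines ?_ fun y y' => ?_
  · refine eval_eq_zero_of_eval_sum_sq_eq_zero ?_ (Finset.mem_univ j)
    simp [← hsos, eval_join_choiForm]
  · have hdeg := natDegree_restrictLine_choiForm_right x y y'
    rw [hsos] at hdeg
    obtain ⟨a, b, hab⟩ :=
      exists_affine_of_natDegree_restrictLine_sum_sq_le hdeg (Finset.mem_univ j)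
    refine ⟨a, b, fun t => ?_⟩
    rw [← hab, ← join_add_smul, smul_zero, add_zero]

theorem exists_bilinear_norm_sq_eq_choi (hsos : choiForm = ∑ j, h j ^ 2) :
    ∃ B : (Fin 3 → ℝ) →ₗ[ℝ] (Fin 3 → ℝ) →ₗ[ℝ] EuclideanSpace ℝ (Fin k),
      ∀ x y, ‖B x y‖ ^ 2 = eval (join x y) choiForm := by
  refine ⟨LinearMap.mk₂ ℝ (fun x y => WithLp.toLp 2 fun j => eval (join x y) (h j))
    ?_ ?_ ?_ ?_, fun x y => ?_⟩
  · intro x x' y; ext j; simp [(isLinearMap_eval_join_left hsos j y).map_add]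
  · intro c x y; ext j; simp [(isLinearMap_eval_join_left hsos j y).map_smul]
  · intro x y y'; ext j; simp [(isLinearMap_eval_join_right hsos j x).map_add]
  · intro c x y; ext j; simp [(isLinearMap_eval_join_right hsos j x).map_smul]
  · simp [EuclideanSpace.real_norm_sq_eq, hsos]

end ChoiSumOfSquares

theorem choi_form_psd_not_sos :
    (∀ v : Fin 6 → ℝ, 0 ≤ eval v choiForm) ∧
    ¬ ∃ (k : ℕ) (h : Fin k → MvPolynomial (Fin 6) ℝ),
        choiForm = ∑ j, (h j) ^ 2 := by
  refine ⟨eval_choiForm_nonneg, fun ⟨k, h, hsos⟩ => ?_⟩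
  obtain ⟨B, hB⟩ := exists_bilinear_norm_sq_eq_choi hsos
  exact not_forall_norm_sq_eq_choi B hB
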